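/- arXiv:1604.08070 — 4 statements merged into one kernel-verified Lean document; each statement's English description precedes it below -/
import Mathlib

section
/- Existence of an optimal randomized test for the static problem: under the standing assumptions, there exists φ̃ ∈ R₀ minimizing φ ↦ ρ((φ−1)H) over R₀, and the minimal value ρ((φ̃−1)H) is finite. -/
/-! The risk `φ ↦ ρ((φ - 1) H)` is convex on the convex set `R₀`, so forward convex combinations
of a minimizing sequence are again minimizing. By a Komlós-type argument in `L²` these
combinations can be chosen to converge a.e.; the limit stays in `R₀` by dominated convergence,
and lower semicontinuity of `ρ` bounds its risk by the infimum. -/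

open MeasureTheory Set Filter Topology

/-- The set `R₀` of randomized tests `φ : Ω → [0,1]` satisfying the capital
constraint `sup_{P* ∈ P_σ} E^{P*}[φH] ≤ V₀`. -/
def R0 {Ω ι : Type*} [MeasurableSpace Ω] (P : Measure Ω)
    (H : Ω → ℝ) (Z : ι → Ω → ℝ) (V₀ : ℝ) : Set (Ω → ℝ) :=
  {φ | Measurable φ ∧ (∀ ω, φ ω ∈ Set.Icc (0 : ℝ) 1) ∧
    ∀ i, ∫ ω, φ ω * H ω * Z i ω ∂P ≤ V₀}

section Hilbert

variable {E : Type*} [NormedAddCommGroup E] [InnerProductSpace ℝ E] [CompleteSpace E]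

theorem exists_mem_forall_norm_le_of_isClosed_convex {D : Set E} (hne : D.Nonempty)
    (hclosed : IsClosed D) (hconv : Convex ℝ D) : ∃ v ∈ D, ∀ x ∈ D, ‖v‖ ≤ ‖x‖ := by
  obtain ⟨v, hvD, hv⟩ := exists_norm_eq_iInf_of_complete_convex hne hclosed.isComplete hconv 0
  refine ⟨v, hvD, fun x hx => ?_⟩
  have hbdd : BddBelow (range fun w : D => ‖(0 : E) - w‖) := by
    refine ⟨0, ?_⟩
    rintro _ ⟨w, rfl⟩
    exact norm_nonneg _
  have := ciInf_le hbdd ⟨x, hx⟩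
  rw [← hv] at this
  simpa using this

/-- The points of minimal norm of the `D n` form a Cauchy sequence: by the parallelogram law,
`‖v n - v N‖² ≤ 2 (‖v n‖² - ‖v N‖²)` for `N ≤ n`, since the midpoint of `v n` and `v N` lies
in `D N`. -/
theorem nonempty_iInter_of_antitone_of_isClosed_of_convex {D : ℕ → Set E} (hanti : Antitone D)
    (hne : ∀ n, (D n).Nonempty) (hclosed : ∀ n, IsClosed (D n)) (hconv : ∀ n, Convex ℝ (D n))
    (hbdd : Bornology.IsBounded (D 0)) : (⋂ n, D n).Nonempty := by
  choose v hvD hvmin using fun n => exists_mem_forall_norm_le_of_isClosed_convex (hne n)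
    (hclosed n) (hconv n)
  obtain ⟨R, hR⟩ := hbdd.exists_norm_le
  have hmono : Monotone fun n => ‖v n‖ ^ 2 := fun a b hab =>
    pow_le_pow_left₀ (norm_nonneg _) (hvmin a _ (hanti hab (hvD b))) 2
  have hbddsq : BddAbove (range fun n => ‖v n‖ ^ 2) := by
    refine ⟨R ^ 2, ?_⟩
    rintro _ ⟨n, rfl⟩
    exact pow_le_pow_left₀ (norm_nonneg _) (hR _ (hanti n.zero_le (hvD n))) 2
  set L := ⨆ n, ‖v n‖ ^ 2
  have hL : Tendsto (fun n => ‖v n‖ ^ 2) atTop (𝓝 L) := tendsto_atTop_ciSup hmono hbddsq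
  have hdist : ∀ N n, N ≤ n → ‖v n - v N‖ ^ 2 ≤ 2 * (L - ‖v N‖ ^ 2) := by
    intro N n hNn
    have hmid : ‖v N‖ ≤ ‖(2⁻¹ : ℝ) • v n + (2⁻¹ : ℝ) • v N‖ :=
      hvmin N _ (hconv N (hanti hNn (hvD n)) (hvD N) (by norm_num) (by norm_num) (by norm_num))
    rw [← smul_add, norm_smul, Real.norm_of_nonneg (by norm_num)] at hmid
    have hpar := parallelogram_law_with_norm ℝ (v n) (v N)
    have hnL : ‖v n‖ ^ 2 ≤ L := le_ciSup hbddsq n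
    nlinarith [norm_nonneg (v N)]
  have hcauchy : CauchySeq v := by
    refine Metric.cauchySeq_iff'.2 fun ε hε => ?_
    have hsmall : ∀ᶠ N in atTop, 2 * (L - ‖v N‖ ^ 2) < ε ^ 2 := by
      have : Tendsto (fun N => 2 * (L - ‖v N‖ ^ 2)) atTop (𝓝 (2 * (L - L))) :=
        (tendsto_const_nhds.sub hL).const_mul 2
      exact this.eventually (gt_mem_nhds (by simpa using pow_pos hε 2))
    obtain ⟨N, hN⟩ := hsmall.exists_forall_of_atTop
    refine ⟨N, fun n hn => ?_⟩
    rw [dist_eq_norm]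
    exact lt_of_pow_lt_pow_left₀ 2 hε.le ((hdist N n hn).trans_lt (hN N le_rfl))
  obtain ⟨l, hl⟩ := cauchySeq_tendsto_of_complete hcauchy
  exact ⟨l, mem_iInter.2 fun n => (hclosed n).mem_of_tendsto hl
    (eventually_atTop.2 ⟨n, fun k hk => hanti hk (hvD k)⟩)⟩

theorem exists_tendsto_of_mem_convexHull_tail {x : ℕ → E} (hx : Bornology.IsBounded (range x)) :
    ∃ y : ℕ → E, (∀ n, y n ∈ convexHull ℝ (x '' Ici n)) ∧ ∃ l, Tendsto y atTop (𝓝 l) := by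
  obtain ⟨l, hl⟩ := nonempty_iInter_of_antitone_of_isClosed_of_convex
    (D := fun n => closure (convexHull ℝ (x '' Ici n)))
    (fun a b hab => closure_mono (convexHull_mono (image_mono (Ici_subset_Ici.2 hab))))
    (fun n => ⟨x n, subset_closure (subset_convexHull ℝ _ ⟨n, self_mem_Ici, rfl⟩)⟩)
    (fun n => isClosed_closure) (fun n => (convex_convexHull ℝ _).closure)
    (isBounded_convexHull.2 (hx.subset (image_subset_range _ _))).closure
  choose y hy hyl using fun n =>
    Metric.mem_closure_iff.1 (mem_iInter.1 hl n) (1 / (n + 1)) Nat.one_div_pos_of_nat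
  refine ⟨y, hy, l, tendsto_iff_dist_tendsto_zero.2 ?_⟩
  exact squeeze_zero (fun n => dist_nonneg) (fun n => (dist_comm _ _).trans_le (hyl n).le)
    tendsto_one_div_add_atTop_nhds_zero_nat

end Hilbert

section Komlos

variable {α : Type*} [MeasurableSpace α] {μ : Measure α}

theorem exists_ae_eq_mem_convexHull_of_mem_convexHull_toLp {E : Type*} [NormedAddCommGroup E]
    [NormedSpace ℝ E] {p : ENNReal} {ι : Type*} {f : ι → α → E} (hf : ∀ i, MemLp (f i) p μ)
    {s : Set ι} {g : Lp E p μ} (hg : g ∈ convexHull ℝ ((fun i => (hf i).toLp (f i)) '' s)) :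
    ∃ w ∈ convexHull ℝ (f '' s), (g : α → E) =ᵐ[μ] w := by
  refine convexHull_min (t := {g : Lp E p μ | ∃ w ∈ convexHull ℝ (f '' s), (g : α → E) =ᵐ[μ] w})
    ?_ ?_ hg
  · rintro _ ⟨i, hi, rfl⟩
    exact ⟨f i, subset_convexHull ℝ _ ⟨i, hi, rfl⟩, MemLp.coeFn_toLp _⟩
  · rintro g₁ ⟨w₁, hw₁, hg₁⟩ g₂ ⟨w₂, hw₂, hg₂⟩ a b ha hb hab
    refine ⟨a • w₁ + b • w₂, convex_convexHull ℝ _ hw₁ hw₂ ha hb hab, ?_⟩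
    filter_upwards [Lp.coeFn_add (a • g₁) (b • g₂), Lp.coeFn_smul a g₁, Lp.coeFn_smul b g₂,
      hg₁, hg₂] with x h h₁ h₂ h₁' h₂'
    rw [h, Pi.add_apply, h₁, h₂]
    simp [h₁', h₂']

/-- Komlós' lemma for uniformly bounded sequences, via `L²`: the convex combinations converge in
norm there, and a subsequence of them converges a.e. -/
theorem exists_tendsto_ae_of_mem_convexHull_tail [IsFiniteMeasure μ] {f : ℕ → α → ℝ}
    (hf : ∀ n, AEStronglyMeasurable (f n) μ) {C : ℝ} (hC : ∀ n, ∀ᵐ x ∂μ, ‖f n x‖ ≤ C) :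
    ∃ w : ℕ → α → ℝ, (∀ n, w n ∈ convexHull ℝ (f '' Ici n)) ∧
      ∃ g : α → ℝ, AEStronglyMeasurable g μ ∧
        ∀ᵐ x ∂μ, Tendsto (fun n => w n x) atTop (𝓝 (g x)) := by
  have hmem : ∀ n, MemLp (f n) 2 μ := fun n => MemLp.of_bound (hf n) C (hC n)
  have hbdd : Bornology.IsBounded (range fun n => (hmem n).toLp (f n)) := by
    refine isBounded_iff_forall_norm_le.2
      ⟨measureUnivNNReal μ ^ (2 : ENNReal).toReal⁻¹ * max C 0, ?_⟩
    rintro _ ⟨n, rfl⟩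
    refine Lp.norm_le_of_ae_bound (le_max_right C 0) ?_
    filter_upwards [MemLp.coeFn_toLp (hmem n), hC n] with x hx hCx
    exact hx ▸ hCx.trans (le_max_left C 0)
  obtain ⟨y, hy, l, hl⟩ := exists_tendsto_of_mem_convexHull_tail hbdd
  choose w hw hyw using fun n => exists_ae_eq_mem_convexHull_of_mem_convexHull_toLp hmem (hy n)
  obtain ⟨ns, hns, hae⟩ := (tendstoInMeasure_of_tendsto_Lp hl).exists_seq_tendsto_ae
  refine ⟨w ∘ ns,
    fun n => convexHull_mono (image_mono (Ici_subset_Ici.2 (hns.id_le n))) (hw (ns n)),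
    l, Lp.aestronglyMeasurable l, ?_⟩
  filter_upwards [hae, ae_all_iff.2 hyw] with x hx hxw
  exact hx.congr fun k => hxw (ns k)

theorem AEMeasurable.exists_measurable_mem_Icc_ae_eq {g : α → ℝ} (hg : AEMeasurable g μ)
    {a b : ℝ} (hab : a ≤ b) (hIcc : ∀ᵐ x ∂μ, g x ∈ Icc a b) :
    ∃ φ : α → ℝ, Measurable φ ∧ (∀ x, φ x ∈ Icc a b) ∧ g =ᵐ[μ] φ := by
  refine ⟨fun x => projIcc a b hab (hg.mk g x),
    continuous_subtype_val.measurable.comp (continuous_projIcc.measurable.comp hg.measurable_mk),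
    fun x => (projIcc a b hab _).2, ?_⟩
  filter_upwards [hg.ae_eq_mk, hIcc] with x hx hxIcc
  simp [← hx, projIcc_of_mem hab hxIcc]

theorem tendsto_integral_mul_of_tendsto_ae {f : ℕ → α → ℝ} {φ g : α → ℝ} (hg : Integrable g μ)
    (hf : ∀ n, AEStronglyMeasurable (f n) μ)
    {C : ℝ} (hC : ∀ n, ∀ᵐ x ∂μ, ‖f n x‖ ≤ C)
    (hlim : ∀ᵐ x ∂μ, Tendsto (fun n => f n x) atTop (𝓝 (φ x))) :
    Tendsto (fun n => ∫ x, f n x * g x ∂μ) atTop (𝓝 (∫ x, φ x * g x ∂μ)) := by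
  refine tendsto_integral_of_dominated_convergence (fun x => C * ‖g x‖)
    (fun n => (hf n).mul hg.aestronglyMeasurable) (hg.norm.const_mul C) (fun n => ?_) ?_
  · filter_upwards [hC n] with x hx
    rw [norm_mul]
    exact mul_le_mul_of_nonneg_right hx (norm_nonneg _)
  · filter_upwards [hlim] with x hx
    exact hx.mul_const (g x)

end Komlos

theorem norm_le_one_of_mem_Icc {x : ℝ} (hx : x ∈ Icc (0 : ℝ) 1) : ‖x‖ ≤ 1 := by
  rw [Real.norm_of_nonneg hx.1]
  exact hx.2

section Tests

variable {Ω ι : Type*} [MeasurableSpace Ω] {P : Measure Ω} {H : Ω → ℝ} {Z : ι → Ω → ℝ} {V₀ : ℝ}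

theorem convex_R0 (hHZ : ∀ i, Integrable (fun ω => H ω * Z i ω) P) :
    Convex ℝ (R0 P H Z V₀) := by
  rintro φ ⟨hφm, hφ01, hφV⟩ ψ ⟨hψm, hψ01, hψV⟩ a b ha hb hab
  refine ⟨(hφm.const_smul a).add (hψm.const_smul b),
    fun ω => convex_Icc 0 1 (hφ01 ω) (hψ01 ω) ha hb hab, fun i => ?_⟩
  have hint : ∀ χ : Ω → ℝ, χ ∈ R0 P H Z V₀ → Integrable (fun ω => χ ω * (H ω * Z i ω)) P :=
    fun χ hχ => (hHZ i).bdd_mul hχ.1.aestronglyMeasurable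
      (ae_of_all _ fun ω => norm_le_one_of_mem_Icc (hχ.2.1 ω))
  calc ∫ ω, (a • φ + b • ψ) ω * H ω * Z i ω ∂P
      = a * ∫ ω, φ ω * (H ω * Z i ω) ∂P + b * ∫ ω, ψ ω * (H ω * Z i ω) ∂P := by
        rw [← integral_const_mul, ← integral_const_mul, ← integral_add
          ((hint φ ⟨hφm, hφ01, hφV⟩).const_mul a) ((hint ψ ⟨hψm, hψ01, hψV⟩).const_mul b)]
        congr 1 with ω
        simp only [Pi.add_apply, Pi.smul_apply, smul_eq_mul]
        ring
    _ ≤ a * V₀ + b * V₀ := by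
        simp_rw [← mul_assoc]
        gcongr
        exacts [hφV i, hψV i]
    _ = V₀ := by rw [← add_mul, hab, one_mul]

theorem mem_R0_of_tendsto_ae (hHZ : ∀ i, Integrable (fun ω => H ω * Z i ω) P)
    {w : ℕ → Ω → ℝ} (hw : ∀ n, w n ∈ R0 P H Z V₀) {φ : Ω → ℝ} (hφm : Measurable φ)
    (hφ01 : ∀ ω, φ ω ∈ Icc (0 : ℝ) 1)
    (hlim : ∀ᵐ ω ∂P, Tendsto (fun n => w n ω) atTop (𝓝 (φ ω))) : φ ∈ R0 P H Z V₀ := by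
  refine ⟨hφm, hφ01, fun i => ?_⟩
  have hV : ∀ n, ∫ ω, w n ω * (H ω * Z i ω) ∂P ≤ V₀ := fun n => by
    simpa only [mul_assoc] using (hw n).2.2 i
  simpa only [mul_assoc] using le_of_tendsto' (tendsto_integral_mul_of_tendsto_ae (hHZ i)
    (fun n => (hw n).1.aestronglyMeasurable)
    (fun n => ae_of_all _ fun ω => norm_le_one_of_mem_Icc ((hw n).2.1 ω)) hlim) hV

end Tests

section Risk

variable {Ω : Type*} {ρ : (Ω → ℝ) → EReal} {H : Ω → ℝ}

theorem risk_nonneg (hρ0 : ρ 0 = 0) (hmono : ∀ X Y : Ω → ℝ, (∀ ω, X ω ≤ Y ω) → ρ Y ≤ ρ X)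
    (hH : ∀ ω, 0 ≤ H ω) {φ : Ω → ℝ} (hφ : ∀ ω, φ ω ≤ 1) :
    0 ≤ ρ (fun ω => (φ ω - 1) * H ω) :=
  hρ0 ▸ hmono _ 0 fun ω => mul_nonpos_of_nonpos_of_nonneg (sub_nonpos.2 (hφ ω)) (hH ω)

theorem convex_setOf_risk_le (hconv : ∀ (X Y : Ω → ℝ) (t : ℝ), t ∈ Set.Icc (0 : ℝ) 1 →
      ρ (fun ω => t * X ω + (1 - t) * Y ω)
        ≤ (t : EReal) * ρ X + ((1 - t : ℝ) : EReal) * ρ Y)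
    (H : Ω → ℝ) (c : EReal) : Convex ℝ {φ : Ω → ℝ | ρ (fun ω => (φ ω - 1) * H ω) ≤ c} := by
  rintro φ hφ ψ hψ a b ha hb hab
  obtain rfl : b = 1 - a := by linarith
  have hcomb : (fun ω => ((a • φ + (1 - a) • ψ) ω - 1) * H ω)
      = fun ω => a * ((φ ω - 1) * H ω) + (1 - a) * ((ψ ω - 1) * H ω) := by
    funext ω
    simp only [Pi.add_apply, Pi.smul_apply, smul_eq_mul]
    ring
  calc ρ (fun ω => ((a • φ + (1 - a) • ψ) ω - 1) * H ω)
      ≤ (a : EReal) * ρ (fun ω => (φ ω - 1) * H ω)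
        + ((1 - a : ℝ) : EReal) * ρ (fun ω => (ψ ω - 1) * H ω) :=
        hcomb ▸ hconv _ _ a ⟨ha, by linarith⟩
    _ ≤ (a : EReal) * c + ((1 - a : ℝ) : EReal) * c := by
        gcongr
        exacts [hφ, hψ]
    _ = c := by
        rw [← EReal.right_distrib_of_nonneg (EReal.coe_nonneg.2 ha) (EReal.coe_nonneg.2 hb),
          ← EReal.coe_add, add_sub_cancel, EReal.coe_one, one_mul]

theorem risk_le_liminf_of_tendsto_ae [MeasurableSpace Ω] {P : Measure Ω} (hH : Integrable H P)
    (hlsc : ∀ (f : ℕ → Ω → ℝ) (g : Ω → ℝ), (∀ n, Integrable (f n) P) →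
      Integrable g P →
      Tendsto (fun n => ∫ ω, |f n ω - g ω| ∂P) atTop (nhds 0) →
      ρ g ≤ liminf (fun n => ρ (f n)) atTop)
    {w : ℕ → Ω → ℝ} (hwm : ∀ n, Measurable (w n)) (hw01 : ∀ n ω, w n ω ∈ Icc (0 : ℝ) 1)
    {φ : Ω → ℝ} (hφm : Measurable φ) (hφ01 : ∀ ω, φ ω ∈ Icc (0 : ℝ) 1)
    (hlim : ∀ᵐ ω ∂P, Tendsto (fun n => w n ω) atTop (𝓝 (φ ω))) :
    ρ (fun ω => (φ ω - 1) * H ω) ≤ liminf (fun n => ρ (fun ω => (w n ω - 1) * H ω)) atTop := by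
  have hint : ∀ χ : Ω → ℝ, Measurable χ → (∀ ω, χ ω ∈ Icc (0 : ℝ) 1) →
      Integrable (fun ω => (χ ω - 1) * H ω) P := fun χ hχm hχ01 =>
    hH.bdd_mul (hχm.sub measurable_const).aestronglyMeasurable (ae_of_all _ fun ω => by
      rw [Real.norm_eq_abs, abs_sub_comm]
      exact abs_sub_le_of_nonneg_of_le zero_le_one le_rfl (hχ01 ω).1 (hχ01 ω).2)
  refine hlsc _ _ (fun n => hint _ (hwm n) (hw01 n)) (hint _ hφm hφ01) ?_
  have hdiff : Tendsto (fun n => ∫ ω, |w n ω - φ ω| * |H ω| ∂P) atTop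
      (𝓝 (∫ ω, |φ ω - φ ω| * |H ω| ∂P)) :=
    tendsto_integral_mul_of_tendsto_ae hH.abs
      (fun n => ((hwm n).sub hφm).abs.aestronglyMeasurable)
      (fun n => ae_of_all _ fun ω => by
        rw [Real.norm_eq_abs, abs_abs]
        exact abs_sub_le_of_nonneg_of_le (hw01 n ω).1 (hw01 n ω).2 (hφ01 ω).1 (hφ01 ω).2)
      (hlim.mono fun ω hω => (hω.sub_const (φ ω)).abs)
  simpa [← abs_mul, ← sub_mul] using hdiff

end Risk

theorem exists_optimal_randomized_test_general
    {Ω : Type*} [MeasurableSpace Ω] (P : Measure Ω) [IsProbabilityMeasure P]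
    {ι : Type*}
    (H : Ω → ℝ) (hHint : Integrable H P)
    (hHpos : ∀ ω, 0 ≤ H ω)
    (Z : ι → Ω → ℝ)
    (hHZ : ∀ i, Integrable (fun ω => H ω * Z i ω) P)
    (V₀ : ℝ)
    (ρ : (Ω → ℝ) → EReal)
    (hρ0 : ρ 0 = 0)
    (hmono : ∀ X Y : Ω → ℝ, (∀ ω, X ω ≤ Y ω) → ρ Y ≤ ρ X)
    (hconv : ∀ (X Y : Ω → ℝ) (t : ℝ), t ∈ Set.Icc (0 : ℝ) 1 →
      ρ (fun ω => t * X ω + (1 - t) * Y ω)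
        ≤ (t : EReal) * ρ X + ((1 - t : ℝ) : EReal) * ρ Y)
    (hlsc : ∀ (f : ℕ → Ω → ℝ) (g : Ω → ℝ), (∀ n, Integrable (f n) P) →
      Integrable g P →
      Tendsto (fun n => ∫ ω, |f n ω - g ω| ∂P) atTop (nhds 0) →
      ρ g ≤ liminf (fun n => ρ (f n)) atTop)
    (φ₀ : Ω → ℝ) (hφ₀ : φ₀ ∈ R0 P H Z V₀)
    (hfin : ρ (fun ω => (φ₀ ω - 1) * H ω) ≠ ⊤) :
    ∃ φt ∈ R0 P H Z V₀,
      (∀ φ ∈ R0 P H Z V₀,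
        ρ (fun ω => (φt ω - 1) * H ω) ≤ ρ (fun ω => (φ ω - 1) * H ω)) ∧
      ρ (fun ω => (φt ω - 1) * H ω) ≠ ⊤ ∧
      ρ (fun ω => (φt ω - 1) * H ω) ≠ ⊥ := by
  set r : (Ω → ℝ) → EReal := fun φ => ρ (fun ω => (φ ω - 1) * H ω)
  obtain ⟨u, hu_anti, hu_lim, hu_mem⟩ :=
    exists_seq_tendsto_sInf ⟨_, mem_image_of_mem r hφ₀⟩ (OrderBot.bddBelow (r '' R0 P H Z V₀))
  choose φs hφsR hrφs using hu_mem
  have hhull : ∀ n, convexHull ℝ (φs '' Ici n) ⊆ R0 P H Z V₀ ∩ {φ | r φ ≤ u n} := fun n =>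
    convexHull_min (by rintro _ ⟨k, hk, rfl⟩; exact ⟨hφsR k, (hrφs k).trans_le (hu_anti hk)⟩)
      ((convex_R0 hHZ).inter (convex_setOf_risk_le hconv H (u n)))
  obtain ⟨w, hw, g, hg, hlim⟩ := exists_tendsto_ae_of_mem_convexHull_tail
    (fun n => (hφsR n).1.aestronglyMeasurable)
    (fun n => ae_of_all P fun ω => norm_le_one_of_mem_Icc ((hφsR n).2.1 ω))
  have hwR : ∀ n, w n ∈ R0 P H Z V₀ ∧ r (w n) ≤ u n := fun n => hhull n (hw n)
  obtain ⟨φ, hφm, hφ01, hgφ⟩ := hg.aemeasurable.exists_measurable_mem_Icc_ae_eq zero_le_one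
    (hlim.mono fun ω hω => isClosed_Icc.mem_of_tendsto hω
      (Eventually.of_forall fun n => (hwR n).1.2.1 ω))
  have hlimφ : ∀ᵐ ω ∂P, Tendsto (fun n => w n ω) atTop (𝓝 (φ ω)) := by
    filter_upwards [hlim, hgφ] with ω hω hgω
    rwa [← hgω]
  have hφmin : r φ ≤ sInf (r '' R0 P H Z V₀) :=
    calc r φ ≤ liminf (fun n => r (w n)) atTop :=
          risk_le_liminf_of_tendsto_ae hHint hlsc (fun n => (hwR n).1.1)
            (fun n => (hwR n).1.2.1) hφm hφ01 hlimφ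
      _ ≤ liminf u atTop := liminf_le_liminf (Eventually.of_forall fun n => (hwR n).2)
      _ = sInf (r '' R0 P H Z V₀) := hu_lim.liminf_eq
  refine ⟨φ, mem_R0_of_tendsto_ae hHZ (fun n => (hwR n).1) hφm hφ01 hlimφ,
    fun ψ hψ => hφmin.trans (sInf_le (mem_image_of_mem r hψ)), ?_, ?_⟩
  · exact ne_top_of_le_ne_top hfin (hφmin.trans (sInf_le (mem_image_of_mem r hφ₀)))
  · exact ne_bot_of_le_ne_bot EReal.zero_ne_bot
      (risk_nonneg hρ0 hmono hHpos fun ω => (hφ01 ω).2)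

/-- Existence of an optimal randomized test for the static problem
`min_{φ ∈ R₀} ρ((φ-1)H)`: under the standing assumptions (ρ a lower
semicontinuous convex risk measure, finite at some `(φ₀-1)H` with `φ₀ ∈ R₀`),
a minimizer `φ̃ ∈ R₀` exists and the minimal value is finite. -/
theorem exists_optimal_randomized_test
    {Ω : Type*} [MeasurableSpace Ω] (P : Measure Ω) [IsProbabilityMeasure P]
    {ι : Type*} [Nonempty ι]
    (H : Ω → ℝ) (hHmeas : Measurable H) (hHint : Integrable H P)
    (hHpos : ∀ ω, 0 ≤ H ω)
    (Z : ι → Ω → ℝ) (hZmeas : ∀ i, Measurable (Z i)) (hZpos : ∀ i ω, 0 ≤ Z i ω)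
    (hZprob : ∀ i, ∫ ω, Z i ω ∂P = 1)
    (hHZ : ∀ i, Integrable (fun ω => H ω * Z i ω) P)
    (hU₀ : BddAbove (Set.range fun i => ∫ ω, H ω * Z i ω ∂P))
    (V₀ : ℝ) (hV₀ : 0 < V₀)
    (ρ : (Ω → ℝ) → EReal)
    (hρ0 : ρ 0 = 0)
    (hmono : ∀ X Y : Ω → ℝ, (∀ ω, X ω ≤ Y ω) → ρ Y ≤ ρ X)
    (htrans : ∀ (X : Ω → ℝ) (c : ℝ), ρ (fun ω => X ω + c) = ρ X - (c : EReal))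
    (hconv : ∀ (X Y : Ω → ℝ) (t : ℝ), t ∈ Set.Icc (0 : ℝ) 1 →
      ρ (fun ω => t * X ω + (1 - t) * Y ω)
        ≤ (t : EReal) * ρ X + ((1 - t : ℝ) : EReal) * ρ Y)
    (hlsc : ∀ (f : ℕ → Ω → ℝ) (g : Ω → ℝ), (∀ n, Integrable (f n) P) →
      Integrable g P →
      Tendsto (fun n => ∫ ω, |f n ω - g ω| ∂P) atTop (nhds 0) →
      ρ g ≤ liminf (fun n => ρ (f n)) atTop)
    (φ₀ : Ω → ℝ) (hφ₀ : φ₀ ∈ R0 P H Z V₀)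
    (hfin : ρ (fun ω => (φ₀ ω - 1) * H ω) ≠ ⊤) :
    ∃ φt ∈ R0 P H Z V₀,
      (∀ φ ∈ R0 P H Z V₀,
        ρ (fun ω => (φt ω - 1) * H ω) ≤ ρ (fun ω => (φ ω - 1) * H ω)) ∧
      ρ (fun ω => (φt ω - 1) * H ω) ≠ ⊤ ∧
      ρ (fun ω => (φt ω - 1) * H ω) ≠ ⊥ :=
  exists_optimal_randomized_test_general P H hHint hHpos Z hHZ V₀ ρ hρ0 hmono hconv hlsc φ₀ hφ₀ hfin
end

section
/- Complementary slackness characterization of optimal tests: let Q have density Z_Q ∈ L^∞ and λ̃ be a finite measure on (P_σ,S) such that the primal value sup_{φ∈R₀} E[φHZ_Q] equals the dual value E[(HZ_Q − H∫Z_{P*}dλ̃)⁺] + Ṽ₀ λ̃(P_σ). Then φ̃ ∈ R₀ is optimal for the primal if and only if: (i) φ̃ = 1 P-a.s. on {HZ_Q > H∫_{P_σ} Z_{P*} dλ̃}, (ii) φ̃ = 0 P-a.s. on {HZ_Q < H∫_{P_σ} Z_{P*} dλ̃}, and (iii) E^{P*}[φ̃H] = Ṽ₀ for λ̃-almost every P*.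 -/
open MeasureTheory Set

/-!
By Fubini, the primal objective of a test `φ` splits as `∫ φ ν dP + ∫ E[φ H Z_{P*}] dλ̃(P*)` with
`ν = H Z_Q - H ∫ Z_{P*} dλ̃`. The first term is at most `∫ ν⁺ dP`, with equality iff `φ = 1` where
`ν > 0` and `φ = 0` where `ν < 0`; by the capital constraint the second is at most `Ṽ₀ λ̃(P_σ)`,
with equality iff the constraint binds `λ̃`-a.e. Hence every test is bounded by the dual value, and
under strong duality a test is optimal iff both bounds are attained.
-/

open Filter Function

lemma forall_le_iff_eq_of_sSup_image_eq {X β : Type*} [ConditionallyCompleteLattice β]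
    {S : Set X} {J : X → β} {D : β} {x : X} (hx : x ∈ S) (hJD : ∀ y ∈ S, J y ≤ D)
    (hsup : sSup (J '' S) = D) : (∀ y ∈ S, J y ≤ J x) ↔ J x = D :=
  ⟨fun h => (hJD x hx).antisymm (hsup ▸ csSup_le ⟨_, x, hx, rfl⟩ (forall_mem_image.2 h)),
    fun h y hy => h ▸ hJD y hy⟩

lemma mul_le_max_zero_of_mem_Icc {φ x : ℝ} (hφ : φ ∈ Icc (0 : ℝ) 1) : φ * x ≤ max x 0 := by
  rcases le_total 0 x with hx | hx
  · exact (mul_le_of_le_one_left hx hφ.2).trans (le_max_left _ _)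
  · exact (mul_nonpos_of_nonneg_of_nonpos hφ.1 hx).trans (le_max_right _ _)

lemma mul_eq_max_zero_iff {φ x : ℝ} :
    φ * x = max x 0 ↔ (0 < x → φ = 1) ∧ (x < 0 → φ = 0) := by
  rcases lt_trichotomy x 0 with hx | rfl | hx
  · simp [max_eq_right hx.le, hx, hx.ne, hx.not_gt]
  · simp
  · simp [max_eq_left hx.le, hx, hx.ne', hx.not_gt]

section Integral

variable {α : Type*} [MeasurableSpace α] {μ : Measure α}

lemma MeasureTheory.Integrable.mul_of_mem_Icc {f φ : α → ℝ} (hf : Integrable f μ)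
    (hφ : Measurable φ) (hφ01 : ∀ x, φ x ∈ Icc (0 : ℝ) 1) : Integrable (fun x => φ x * f x) μ :=
  hf.bdd_mul hφ.aestronglyMeasurable
    (ae_of_all _ fun x => (Real.norm_of_nonneg (hφ01 x).1).trans_le (hφ01 x).2)

lemma integral_eq_integral_iff_ae_eq_of_ae_le {f g : α → ℝ} (hf : Integrable f μ)
    (hg : Integrable g μ) (hfg : f ≤ᵐ[μ] g) : ∫ x, f x ∂μ = ∫ x, g x ∂μ ↔ f =ᵐ[μ] g := by
  calc ∫ x, f x ∂μ = ∫ x, g x ∂μ ↔ ∫ x, (g - f) x ∂μ = 0 := by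
        rw [integral_sub' hg hf, sub_eq_zero, eq_comm]
    _ ↔ g - f =ᵐ[μ] 0 :=
        integral_eq_zero_iff_of_nonneg_ae (hfg.mono fun x hx => sub_nonneg.2 hx) (hg.sub hf)
    _ ↔ f =ᵐ[μ] g := by
        simp only [EventuallyEq, Pi.sub_apply, Pi.zero_apply, sub_eq_zero, eq_comm]

lemma integral_mul_le_integral_max_zero {f φ : α → ℝ} (hf : Integrable f μ)
    (hφ : Measurable φ) (hφ01 : ∀ x, φ x ∈ Icc (0 : ℝ) 1) :
    ∫ x, φ x * f x ∂μ ≤ ∫ x, max (f x) 0 ∂μ :=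
  integral_mono (hf.mul_of_mem_Icc hφ hφ01) hf.pos_part
    fun x => mul_le_max_zero_of_mem_Icc (hφ01 x)

lemma integral_mul_eq_integral_max_zero_iff {f φ : α → ℝ} (hf : Integrable f μ)
    (hφ : Measurable φ) (hφ01 : ∀ x, φ x ∈ Icc (0 : ℝ) 1) :
    ∫ x, φ x * f x ∂μ = ∫ x, max (f x) 0 ∂μ ↔
      (∀ᵐ x ∂μ, 0 < f x → φ x = 1) ∧ (∀ᵐ x ∂μ, f x < 0 → φ x = 0) := by
  rw [integral_eq_integral_iff_ae_eq_of_ae_le (hf.mul_of_mem_Icc hφ hφ01) hf.pos_part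
    (ae_of_all _ fun x => mul_le_max_zero_of_mem_Icc (hφ01 x)), ← eventually_and]
  exact eventually_congr (ae_of_all _ fun x => mul_eq_max_zero_iff)

variable [IsFiniteMeasure μ]

lemma integral_le_mul_measure_univ {g : α → ℝ} {c : ℝ} (hg : Integrable g μ)
    (hgc : ∀ x, g x ≤ c) : ∫ x, g x ∂μ ≤ c * (μ univ).toReal := by
  simpa [mul_comm, measureReal_def] using integral_mono hg (integrable_const c) hgc

lemma integral_eq_mul_measure_univ_iff {g : α → ℝ} {c : ℝ} (hg : Integrable g μ)
    (hgc : ∀ x, g x ≤ c) : ∫ x, g x ∂μ = c * (μ univ).toReal ↔ ∀ᵐ x ∂μ, g x = c := by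
  rw [← measureReal_def, mul_comm, ← smul_eq_mul, ← integral_const]
  exact integral_eq_integral_iff_ae_eq_of_ae_le hg (integrable_const c) (ae_of_all _ hgc)

end Integral

section Mixture

variable {Ω ι : Type*} [MeasurableSpace Ω] [MeasurableSpace ι] {P : Measure Ω}
  {μ : Measure ι} [IsFiniteMeasure μ] {Z : ι → Ω → ℝ}

lemma ae_integrable_of_integral_eq_one [SFinite P] (hZpos : ∀ i ω, 0 ≤ Z i ω)
    (hZprob : ∀ i, ∫ ω, Z i ω ∂P = 1) (hjoint : Measurable (uncurry Z)) :
    ∀ᵐ ω ∂P, Integrable (fun i => Z i ω) μ := by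
  have hprod : Integrable (uncurry Z) (μ.prod P) := by
    refine (integrable_prod_iff hjoint.aestronglyMeasurable).2 ⟨ae_of_all _ fun i => ?_, ?_⟩
    · exact Integrable.of_integral_ne_zero (by simp [hZprob])
    · simp only [uncurry_apply_pair, Real.norm_of_nonneg (hZpos _ _), hZprob]
      exact integrable_const 1
  exact hprod.prod_left_ae

lemma integrable_prod_mul_of_integrable_mul_integral {w : Ω → ℝ} (hw : Measurable w)
    (hw0 : ∀ ω, 0 ≤ w ω) (hZpos : ∀ i ω, 0 ≤ Z i ω) (hjoint : Measurable (uncurry Z))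
    (hZ : ∀ᵐ ω ∂P, Integrable (fun i => Z i ω) μ)
    (hwZ : Integrable (fun ω => w ω * ∫ i, Z i ω ∂μ) P) :
    Integrable (fun p : Ω × ι => w p.1 * Z p.2 p.1) (P.prod μ) := by
  refine (integrable_prod_iff (f := fun p : Ω × ι => w p.1 * Z p.2 p.1)
    ((hw.comp measurable_fst).mul (hjoint.comp measurable_swap)).aestronglyMeasurable).2
    ⟨hZ.mono fun ω h => h.const_mul (w ω), hwZ.congr (ae_of_all _ fun ω => ?_)⟩
  simp only [Real.norm_of_nonneg (mul_nonneg (hw0 ω) (hZpos _ ω)), integral_const_mul]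

lemma integral_mul_integral_swap [SFinite P] {w : Ω → ℝ}
    (hwZ : Integrable (fun p : Ω × ι => w p.1 * Z p.2 p.1) (P.prod μ)) :
    ∫ ω, w ω * ∫ i, Z i ω ∂μ ∂P = ∫ i, ∫ ω, w ω * Z i ω ∂P ∂μ := by
  rw [← integral_integral_swap hwZ]
  simp only [integral_const_mul]

end Mixture

theorem complementary_slackness_optimal_tests_general
    {Ω : Type*} [MeasurableSpace Ω] (P : Measure Ω) [IsProbabilityMeasure P]
    {ι : Type*} [MeasurableSpace ι]
    (H : Ω → ℝ) (hHmeas : Measurable H) (hHint : Integrable H P)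
    (hHpos : ∀ ω, 0 ≤ H ω)
    (Z : ι → Ω → ℝ) (hZpos : ∀ i ω, 0 ≤ Z i ω)
    (hZprob : ∀ i, ∫ ω, Z i ω ∂P = 1)
    (hjoint : Measurable fun p : ι × Ω => Z p.1 p.2)
    (V₀ : ℝ)
    (ZQ : Ω → ℝ) (hZQmeas : Measurable ZQ) (hZQpos : ∀ ω, 0 ≤ ZQ ω)
    (hZQbdd : ∃ C, ∀ ω, ZQ ω ≤ C)
    (μ : Measure ι) [IsFiniteMeasure μ]
    (hmix : Integrable (fun ω => H ω * ∫ i, Z i ω ∂μ) P)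
    (hdual : sSup ((fun φ : Ω → ℝ => ∫ ω, φ ω * H ω * ZQ ω ∂P) '' R0 P H Z V₀)
      = (∫ ω, max (H ω * ZQ ω - H ω * ∫ i, Z i ω ∂μ) 0 ∂P)
          + V₀ * (μ Set.univ).toReal) :
    ∀ φt ∈ R0 P H Z V₀,
      ((∀ φ ∈ R0 P H Z V₀,
          ∫ ω, φ ω * H ω * ZQ ω ∂P ≤ ∫ ω, φt ω * H ω * ZQ ω ∂P) ↔
        ((∀ᵐ ω ∂P, H ω * (∫ i, Z i ω ∂μ) < H ω * ZQ ω → φt ω = 1) ∧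
         (∀ᵐ ω ∂P, H ω * ZQ ω < H ω * (∫ i, Z i ω ∂μ) → φt ω = 0) ∧
         (∀ᵐ i ∂μ, ∫ ω, φt ω * H ω * Z i ω ∂P = V₀))) := by
  intro φt hφt
  obtain ⟨CQ, hCQ⟩ := hZQbdd
  have hν : Integrable (fun ω => H ω * ZQ ω - H ω * ∫ i, Z i ω ∂μ) P :=
    (hHint.mul_bdd hZQmeas.aestronglyMeasurable (ae_of_all _ fun ω =>
      (Real.norm_of_nonneg (hZQpos ω)).trans_le (hCQ ω))).sub hmix
  have hφHm : ∀ φ ∈ R0 P H Z V₀,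
      Integrable (fun ω => φ ω * H ω * ∫ i, Z i ω ∂μ) P := fun φ ⟨hφ, hφ01, _⟩ => by
    simpa only [mul_assoc] using hmix.mul_of_mem_Icc hφ hφ01
  have hZ := ae_integrable_of_integral_eq_one (μ := μ) hZpos hZprob hjoint
  have hprod : ∀ φ ∈ R0 P H Z V₀,
      Integrable (fun p : Ω × ι => φ p.1 * H p.1 * Z p.2 p.1) (P.prod μ) :=
    fun φ hφ => integrable_prod_mul_of_integrable_mul_integral (w := fun ω => φ ω * H ω)
      (hφ.1.mul hHmeas) (fun ω => mul_nonneg (hφ.2.1 ω).1 (hHpos ω)) hZpos hjoint hZ (hφHm φ hφ)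
  have hdecomp : ∀ φ ∈ R0 P H Z V₀, ∫ ω, φ ω * H ω * ZQ ω ∂P =
      ∫ ω, φ ω * (H ω * ZQ ω - H ω * ∫ i, Z i ω ∂μ) ∂P
        + ∫ i, ∫ ω, φ ω * H ω * Z i ω ∂P ∂μ := by
    intro φ hφ
    rw [← integral_mul_integral_swap (hprod φ hφ), ← integral_add
      (hν.mul_of_mem_Icc hφ.1 hφ.2.1) (hφHm φ hφ)]
    congr 1 with ω
    ring
  have hweak : ∀ φ ∈ R0 P H Z V₀, ∫ ω, φ ω * H ω * ZQ ω ∂P ≤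
      (∫ ω, max (H ω * ZQ ω - H ω * ∫ i, Z i ω ∂μ) 0 ∂P) + V₀ * (μ Set.univ).toReal :=
    fun φ hφ => hdecomp φ hφ ▸ add_le_add (integral_mul_le_integral_max_zero hν hφ.1 hφ.2.1)
      (integral_le_mul_measure_univ (hprod φ hφ).integral_prod_right hφ.2.2)
  refine (forall_le_iff_eq_of_sSup_image_eq hφt hweak hdual).trans ?_
  rw [hdecomp φt hφt, add_eq_add_iff_eq_and_eq
    (integral_mul_le_integral_max_zero hν hφt.1 hφt.2.1)
    (integral_le_mul_measure_univ (hprod φt hφt).integral_prod_right hφt.2.2),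
    integral_mul_eq_integral_max_zero_iff hν hφt.1 hφt.2.1,
    integral_eq_mul_measure_univ_iff (hprod φt hφt).integral_prod_right hφt.2.2]
  simp only [sub_pos, sub_neg, and_assoc]

/-- Complementary slackness: if strong duality holds between the primal
`sup_{φ∈R₀} E[φHZ_Q]` and the dual at `λ̃`, then `φ̃ ∈ R₀` is optimal iff
`φ̃ = 1` a.s. on `{HZ_Q > H∫Z_{P*}dλ̃}`, `φ̃ = 0` a.s. on
`{HZ_Q < H∫Z_{P*}dλ̃}`, and `E^{P*}[φ̃H] = Ṽ₀` for `λ̃`-a.e. `P*`. -/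
theorem complementary_slackness_optimal_tests
    {Ω : Type*} [MeasurableSpace Ω] (P : Measure Ω) [IsProbabilityMeasure P]
    {ι : Type*} [Nonempty ι] [MeasurableSpace ι]
    (H : Ω → ℝ) (hHmeas : Measurable H) (hHint : Integrable H P)
    (hHpos : ∀ ω, 0 ≤ H ω)
    (Z : ι → Ω → ℝ) (hZmeas : ∀ i, Measurable (Z i)) (hZpos : ∀ i ω, 0 ≤ Z i ω)
    (hZprob : ∀ i, ∫ ω, Z i ω ∂P = 1)
    (hjoint : Measurable fun p : ι × Ω => Z p.1 p.2)
    (hsup : ∃ C, ∀ i, ∫ ω, H ω * Z i ω ∂P ≤ C)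
    (V₀ : ℝ) (hV₀ : 0 < V₀)
    (ZQ : Ω → ℝ) (hZQmeas : Measurable ZQ) (hZQpos : ∀ ω, 0 ≤ ZQ ω)
    (hZQbdd : ∃ C, ∀ ω, ZQ ω ≤ C) (hZQprob : ∫ ω, ZQ ω ∂P = 1)
    (μ : Measure ι) [IsFiniteMeasure μ]
    (hmix : Integrable (fun ω => H ω * ∫ i, Z i ω ∂μ) P)
    (hdual : sSup ((fun φ : Ω → ℝ => ∫ ω, φ ω * H ω * ZQ ω ∂P) '' R0 P H Z V₀)
      = (∫ ω, max (H ω * ZQ ω - H ω * ∫ i, Z i ω ∂μ) 0 ∂P)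
          + V₀ * (μ Set.univ).toReal) :
    ∀ φt ∈ R0 P H Z V₀,
      ((∀ φ ∈ R0 P H Z V₀,
          ∫ ω, φ ω * H ω * ZQ ω ∂P ≤ ∫ ω, φt ω * H ω * ZQ ω ∂P) ↔
        ((∀ᵐ ω ∂P, H ω * (∫ i, Z i ω ∂μ) < H ω * ZQ ω → φt ω = 1) ∧
         (∀ᵐ ω ∂P, H ω * ZQ ω < H ω * (∫ i, Z i ω ∂μ) → φt ω = 0) ∧
         (∀ᵐ i ∂μ, ∫ ω, φt ω * H ω * Z i ω ∂P = V₀))) :=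
  complementary_slackness_optimal_tests_general P H hHmeas hHint hHpos Z hZpos hZprob hjoint V₀ ZQ
    hZQmeas hZQpos hZQbdd μ hmix hdual
end

section
/- The success ratio of an admissible strategy is a feasible randomized test: let (V₀,ξ) be an admissible strategy with V₀ ≤ Ṽ₀ whose value process V_t is a supermartingale under every P* ∈ P_σ with V_T ≥ 0. Define φ = 1_{V_T ≥ H} + (V_T/H)·1_{V_T < H}. Then φ is a randomized test (0 ≤ φ ≤ 1), φH ≤ V_T, −(H−V_T)⁺ = (φ−1)H, and sup_{P*∈P_σ} E^{P*}[φH] ≤ V₀ ≤ Ṽ₀, i.e., φ ∈ R₀. -/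
/-!
Pointwise, `φ = min(1, V_T / H)` (with `φ = 1` where `H ≤ V_T`), so `0 ≤ φH ≤ V_T` and the shortfall
`(H - V_T)⁺` is exactly `(1 - φ)H`. Integrating `φH ≤ V_T` against each density `Z i` and using the
supermartingale bound `E^{P*}[V_T] ≤ V₀` gives the capital constraint.
-/

open MeasureTheory Set

/-- On `v < h` with `0 ≤ v` we have `0 < h`, so the division is genuine. -/
noncomputable def successRatio (h v : ℝ) : ℝ := if h ≤ v then 1 else v / h

section successRatio

variable {h v : ℝ}

lemma successRatio_mul_of_lt (hv : 0 ≤ v) (hlt : v < h) : successRatio h v * h = v := by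
  rw [successRatio, if_neg hlt.not_ge, div_mul_cancel₀ _ (hv.trans_lt hlt).ne']

lemma successRatio_mem_Icc (hv : 0 ≤ v) : successRatio h v ∈ Icc (0 : ℝ) 1 := by
  unfold successRatio
  split_ifs with hle
  · exact ⟨zero_le_one, le_rfl⟩
  · have hpos : 0 < h := hv.trans_lt (not_le.mp hle)
    exact ⟨div_nonneg hv hpos.le, div_le_one_of_le₀ (not_le.mp hle).le hpos.le⟩

lemma successRatio_mul_le (hv : 0 ≤ v) : successRatio h v * h ≤ v := by
  rcases le_or_gt h v with hle | hlt
  · simp [successRatio, hle]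
  · exact (successRatio_mul_of_lt hv hlt).le

lemma successRatio_mul_nonneg (hh : 0 ≤ h) (hv : 0 ≤ v) : 0 ≤ successRatio h v * h :=
  mul_nonneg (successRatio_mem_Icc hv).1 hh

lemma neg_shortfall_eq_successRatio_sub_one_mul (hv : 0 ≤ v) :
    -max (h - v) 0 = (successRatio h v - 1) * h := by
  rcases le_or_gt h v with hle | hlt
  · simp [successRatio, hle]
  · rw [max_eq_left (sub_nonneg.mpr hlt.le), sub_mul, successRatio_mul_of_lt hv hlt]
    ring

end successRatio

lemma Measurable.successRatio {Ω : Type*} [MeasurableSpace Ω] {H V : Ω → ℝ}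
    (hH : Measurable H) (hV : Measurable V) :
    Measurable fun ω => successRatio (H ω) (V ω) :=
  Measurable.ite (measurableSet_le hH hV) measurable_const (hV.div hH)

lemma integral_successRatio_mul_le {Ω : Type*} [MeasurableSpace Ω] {P : Measure Ω}
    {H V Z : Ω → ℝ} (hH : ∀ ω, 0 ≤ H ω) (hV : ∀ ω, 0 ≤ V ω) (hZ : ∀ ω, 0 ≤ Z ω)
    (hVZ : Integrable (fun ω => V ω * Z ω) P) :
    ∫ ω, successRatio (H ω) (V ω) * H ω * Z ω ∂P ≤ ∫ ω, V ω * Z ω ∂P :=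
  integral_mono_of_nonneg
    (Filter.Eventually.of_forall fun ω => mul_nonneg (successRatio_mul_nonneg (hH ω) (hV ω)) (hZ ω))
    hVZ (Filter.Eventually.of_forall fun ω => mul_le_mul_of_nonneg_right
      (successRatio_mul_le (hV ω)) (hZ ω))

theorem success_ratio_mem_R0_general
    {Ω : Type*} [MeasurableSpace Ω] (P : Measure Ω)
    {ι : Type*}
    (H : Ω → ℝ) (hHmeas : Measurable H)
    (hHpos : ∀ ω, 0 ≤ H ω)
    (Z : ι → Ω → ℝ) (hZpos : ∀ i ω, 0 ≤ Z i ω)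
    (V₀ Vt₀ : ℝ) (hVle : V₀ ≤ Vt₀)
    (VT : Ω → ℝ) (hVTmeas : Measurable VT) (hVTpos : ∀ ω, 0 ≤ VT ω)
    (hVTint : ∀ i, Integrable (fun ω => VT ω * Z i ω) P)
    (hsupermart : ∀ i, ∫ ω, VT ω * Z i ω ∂P ≤ V₀) :
    let φ : Ω → ℝ := fun ω => if H ω ≤ VT ω then 1 else VT ω / H ω
    Measurable φ ∧ (∀ ω, φ ω ∈ Set.Icc (0 : ℝ) 1) ∧
    (∀ ω, φ ω * H ω ≤ VT ω) ∧
    (∀ ω, -(max (H ω - VT ω) 0) = (φ ω - 1) * H ω) ∧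
    (∀ i, ∫ ω, φ ω * H ω * Z i ω ∂P ≤ V₀) ∧
    φ ∈ R0 P H Z Vt₀ := by
  intro φ
  have hmeas : Measurable φ := hHmeas.successRatio hVTmeas
  have hmem : ∀ ω, φ ω ∈ Icc (0 : ℝ) 1 := fun ω => successRatio_mem_Icc (hVTpos ω)
  have hcapital : ∀ i, ∫ ω, φ ω * H ω * Z i ω ∂P ≤ V₀ := fun i =>
    (integral_successRatio_mul_le hHpos hVTpos (hZpos i) (hVTint i)).trans (hsupermart i)
  exact ⟨hmeas, hmem, fun ω => successRatio_mul_le (hVTpos ω),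
    fun ω => neg_shortfall_eq_successRatio_sub_one_mul (hVTpos ω), hcapital,
    hmeas, hmem, fun i => (hcapital i).trans hVle⟩

/-- The success ratio `φ = 1_{V_T ≥ H} + (V_T/H)1_{V_T < H}` of an admissible
strategy with initial capital `V₀ ≤ Ṽ₀`, whose terminal value `V_T ≥ 0`
satisfies the supermartingale bounds `E^{P*}[V_T] ≤ V₀`, is a feasible
randomized test: `0 ≤ φ ≤ 1`, `φH ≤ V_T`, `−(H−V_T)⁺ = (φ−1)H`, and
`sup_{P*} E^{P*}[φH] ≤ V₀ ≤ Ṽ₀`, i.e. `φ ∈ R₀`. -/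
theorem success_ratio_mem_R0
    {Ω : Type*} [MeasurableSpace Ω] (P : Measure Ω) [IsProbabilityMeasure P]
    {ι : Type*} [Nonempty ι]
    (H : Ω → ℝ) (hHmeas : Measurable H) (hHint : Integrable H P)
    (hHpos : ∀ ω, 0 ≤ H ω)
    (Z : ι → Ω → ℝ) (hZmeas : ∀ i, Measurable (Z i)) (hZpos : ∀ i ω, 0 ≤ Z i ω)
    (hZprob : ∀ i, ∫ ω, Z i ω ∂P = 1)
    (V₀ Vt₀ : ℝ) (hV₀ : 0 < V₀) (hVle : V₀ ≤ Vt₀)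
    (VT : Ω → ℝ) (hVTmeas : Measurable VT) (hVTpos : ∀ ω, 0 ≤ VT ω)
    (hVTint : ∀ i, Integrable (fun ω => VT ω * Z i ω) P)
    (hsupermart : ∀ i, ∫ ω, VT ω * Z i ω ∂P ≤ V₀) :
    let φ : Ω → ℝ := fun ω => if H ω ≤ VT ω then 1 else VT ω / H ω
    Measurable φ ∧ (∀ ω, φ ω ∈ Set.Icc (0 : ℝ) 1) ∧
    (∀ ω, φ ω * H ω ≤ VT ω) ∧
    (∀ ω, -(max (H ω - VT ω) 0) = (φ ω - 1) * H ω) ∧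
    (∀ i, ∫ ω, φ ω * H ω * Z i ω ∂P ≤ V₀) ∧
    φ ∈ R0 P H Z Vt₀ :=
  success_ratio_mem_R0_general P H hHmeas hHpos Z hZpos V₀ Vt₀ hVle VT hVTmeas hVTpos hVTint
    hsupermart
end

section
/- If the value processes of admissible strategies are supermartingales under each P* ∈ P_σ, then for any admissible strategy (V₀, ξ) with terminal value V_T, the shortfall risk satisfies ρ(−(H−V_T)⁺) = ρ((φ−1)H) ≥ min_{φ'∈R₀} ρ((φ'−1)H), where φ is the success ratio of (V₀,ξ); i.e., the static problem value is a lower bound for the dynamic problem value. -/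
open MeasureTheory Set

section SuccessRatio

variable {h v : ℝ}

lemma neg_max_sub_zero_eq_successRatio_sub_one_mul (hv : 0 ≤ v) :
    -(max (h - v) 0) = (successRatio h v - 1) * h := by
  unfold successRatio
  split_ifs with hhv
  · simp [hhv]
  · have hh : 0 < h := hv.trans_lt (not_le.mp hhv)
    rw [max_eq_left (by linarith)]
    field_simp
    ring

end SuccessRatio

lemma successRatio_mem_R0 {Ω ι : Type*} [MeasurableSpace Ω] (P : Measure Ω)
    {H : Ω → ℝ} (hHmeas : Measurable H) (hHpos : ∀ ω, 0 ≤ H ω)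
    {Z : ι → Ω → ℝ} (hZpos : ∀ i ω, 0 ≤ Z i ω)
    {VT : Ω → ℝ} (hVTmeas : Measurable VT) (hVTpos : ∀ ω, 0 ≤ VT ω)
    (hVTint : ∀ i, Integrable (fun ω => VT ω * Z i ω) P)
    {c : ℝ} (hVTle : ∀ i, ∫ ω, VT ω * Z i ω ∂P ≤ c) :
    (fun ω => successRatio (H ω) (VT ω)) ∈ R0 P H Z c := by
  refine ⟨Measurable.ite (measurableSet_le hHmeas hVTmeas) measurable_const (hVTmeas.div hHmeas),
    fun ω => successRatio_mem_Icc (hVTpos ω), fun i => ?_⟩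
  have hnonneg : ∀ ω, 0 ≤ successRatio (H ω) (VT ω) * H ω * Z i ω := fun ω =>
    mul_nonneg (successRatio_mul_nonneg (hHpos ω) (hVTpos ω)) (hZpos i ω)
  have hle : ∀ ω, successRatio (H ω) (VT ω) * H ω * Z i ω ≤ VT ω * Z i ω := fun ω =>
    mul_le_mul_of_nonneg_right (successRatio_mul_le (hVTpos ω)) (hZpos i ω)
  calc ∫ ω, successRatio (H ω) (VT ω) * H ω * Z i ω ∂P ≤ ∫ ω, VT ω * Z i ω ∂P :=
        integral_mono_of_nonneg (.of_forall hnonneg) (hVTint i) (.of_forall hle)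
    _ ≤ c := hVTle i

theorem static_value_lower_bound_for_dynamic_general
    {Ω : Type*} [MeasurableSpace Ω] (P : Measure Ω)
    {ι : Type*}
    (H : Ω → ℝ) (hHmeas : Measurable H)
    (hHpos : ∀ ω, 0 ≤ H ω)
    (Z : ι → Ω → ℝ) (hZpos : ∀ i ω, 0 ≤ Z i ω)
    (ρ : (Ω → ℝ) → EReal)
    (V₀ Vt₀ : ℝ) (hVle : V₀ ≤ Vt₀)
    (VT : Ω → ℝ) (hVTmeas : Measurable VT) (hVTpos : ∀ ω, 0 ≤ VT ω)
    (hVTint : ∀ i, Integrable (fun ω => VT ω * Z i ω) P)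
    (hsupermart : ∀ i, ∫ ω, VT ω * Z i ω ∂P ≤ V₀)
    (φt : Ω → ℝ)
    (hφtmin : ∀ φ ∈ R0 P H Z Vt₀,
      ρ (fun ω => (φt ω - 1) * H ω) ≤ ρ (fun ω => (φ ω - 1) * H ω)) :
    ρ (fun ω => -(max (H ω - VT ω) 0))
        = ρ (fun ω => ((if H ω ≤ VT ω then (1 : ℝ) else VT ω / H ω) - 1) * H ω) ∧
    ρ (fun ω => (φt ω - 1) * H ω) ≤ ρ (fun ω => -(max (H ω - VT ω) 0)) := by
  have hshortfall : (fun ω => -(max (H ω - VT ω) 0))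
      = fun ω => (successRatio (H ω) (VT ω) - 1) * H ω :=
    funext fun ω => neg_max_sub_zero_eq_successRatio_sub_one_mul (hVTpos ω)
  have hmem := successRatio_mem_R0 P hHmeas hHpos hZpos hVTmeas hVTpos hVTint
    fun i => (hsupermart i).trans hVle
  exact ⟨congrArg ρ hshortfall, hshortfall ▸ hφtmin _ hmem⟩

/-- The static value is a lower bound for the dynamic value: for any admissible
strategy with terminal value `V_T` (nonnegative, `E^{P*}[V_T] ≤ V₀ ≤ Ṽ₀` by the
supermartingale property), the shortfall risk satisfies
`ρ(−(H−V_T)⁺) = ρ((φ−1)H) ≥ min_{φ'∈R₀} ρ((φ'−1)H)`, where `φ` is the success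
ratio `φ = 1_{V_T≥H} + (V_T/H)1_{V_T<H}`. -/
theorem static_value_lower_bound_for_dynamic
    {Ω : Type*} [MeasurableSpace Ω] (P : Measure Ω) [IsProbabilityMeasure P]
    {ι : Type*} [Nonempty ι]
    (H : Ω → ℝ) (hHmeas : Measurable H) (hHint : Integrable H P)
    (hHpos : ∀ ω, 0 ≤ H ω)
    (Z : ι → Ω → ℝ) (hZmeas : ∀ i, Measurable (Z i)) (hZpos : ∀ i ω, 0 ≤ Z i ω)
    (hZprob : ∀ i, ∫ ω, Z i ω ∂P = 1)
    (ρ : (Ω → ℝ) → EReal)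
    (hρ0 : ρ 0 = 0)
    (hmono : ∀ X Y : Ω → ℝ, (∀ ω, X ω ≤ Y ω) → ρ Y ≤ ρ X)
    (htrans : ∀ (X : Ω → ℝ) (c : ℝ), ρ (fun ω => X ω + c) = ρ X - (c : EReal))
    (hconv : ∀ (X Y : Ω → ℝ) (t : ℝ), t ∈ Set.Icc (0 : ℝ) 1 →
      ρ (fun ω => t * X ω + (1 - t) * Y ω)
        ≤ (t : EReal) * ρ X + ((1 - t : ℝ) : EReal) * ρ Y)
    (V₀ Vt₀ : ℝ) (hV₀ : 0 < V₀) (hVle : V₀ ≤ Vt₀)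
    (VT : Ω → ℝ) (hVTmeas : Measurable VT) (hVTpos : ∀ ω, 0 ≤ VT ω)
    (hVTint : ∀ i, Integrable (fun ω => VT ω * Z i ω) P)
    (hsupermart : ∀ i, ∫ ω, VT ω * Z i ω ∂P ≤ V₀)
    (φt : Ω → ℝ) (hφt : φt ∈ R0 P H Z Vt₀)
    (hφtmin : ∀ φ ∈ R0 P H Z Vt₀,
      ρ (fun ω => (φt ω - 1) * H ω) ≤ ρ (fun ω => (φ ω - 1) * H ω)) :
    ρ (fun ω => -(max (H ω - VT ω) 0))
        = ρ (fun ω => ((if H ω ≤ VT ω then (1 : ℝ) else VT ω / H ω) - 1) * H ω) ∧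
    ρ (fun ω => (φt ω - 1) * H ω) ≤ ρ (fun ω => -(max (H ω - VT ω) 0)) :=
  static_value_lower_bound_for_dynamic_general P H hHmeas hHpos Z hZpos ρ V₀ Vt₀ hVle VT hVTmeas
    hVTpos hVTint hsupermart φt hφtmin
end
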